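/- The point z₁ = 1/4, z₂ = z₃ = 1/2, z₁₂ = z₁₃ = 0, z₂₃ = 1/4, z₁₁ = 3/16 satisfies all McCormick inequalities (z_{ij} ≥ 0, z_{ij} ≥ z_i + z_j - 1, z_{ij} ≤ z_i, z_{ij} ≤ z_j for all 1 ≤ i < j ≤ 3) and all triangle inequalities (z_{ij} + z_{ik} ≤ z_i + z_{jk} for all permutations, and z_i + z_j + z_k - z_{ij} - z_{ik} - z_{jk} ≤ 1), but it violates the inequality z₁₁ ≥ z₁₂₃²/z₂₃ + (z₁₂-z₁₂₃)²/(z₂-z₂₃) + (z₁₃-z₁₂₃)²/(z₃-z₂₃) + (z₁-z₁₂-z₁₃+z₁₂₃)²/(1-z₂-z₃+z₂₃) for every choice of z₁₂₃ satisfying 0 ≤ z₁₂₃ ≤ z₁₂. -/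
import Mathlib

theorem point_separates_relaxations :
    let z₁ : ℝ := 1/4; let z₂ : ℝ := 1/2; let z₃ : ℝ := 1/2;
    let z₁₂ : ℝ := 0; let z₁₃ : ℝ := 0; let z₂₃ : ℝ := 1/4; let z₁₁ : ℝ := 3/16;
    -- McCormick inequalities for all 1 ≤ i < j ≤ 3
    (0 ≤ z₁₂ ∧ z₁ + z₂ - 1 ≤ z₁₂ ∧ z₁₂ ≤ z₁ ∧ z₁₂ ≤ z₂) ∧
    (0 ≤ z₁₃ ∧ z₁ + z₃ - 1 ≤ z₁₃ ∧ z₁₃ ≤ z₁ ∧ z₁₃ ≤ z₃) ∧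
    (0 ≤ z₂₃ ∧ z₂ + z₃ - 1 ≤ z₂₃ ∧ z₂₃ ≤ z₂ ∧ z₂₃ ≤ z₃) ∧
    -- triangle inequalities
    (z₁₂ + z₁₃ ≤ z₁ + z₂₃) ∧ (z₁₂ + z₂₃ ≤ z₂ + z₁₃) ∧ (z₁₃ + z₂₃ ≤ z₃ + z₁₂) ∧
    (z₁ + z₂ + z₃ - z₁₂ - z₁₃ - z₂₃ ≤ 1) ∧
    -- violation of the new inequality for every admissible z₁₂₃
    (∀ z₁₂₃ : ℝ, 0 ≤ z₁₂₃ → z₁₂₃ ≤ z₁₂ →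
      ¬ (z₁₂₃ ^ 2 / z₂₃ + (z₁₂ - z₁₂₃) ^ 2 / (z₂ - z₂₃) + (z₁₃ - z₁₂₃) ^ 2 / (z₃ - z₂₃) +
          (z₁ - z₁₂ - z₁₃ + z₁₂₃) ^ 2 / (1 - z₂ - z₃ + z₂₃) ≤ z₁₁)) := by
  refine ⟨by norm_num, by norm_num, by norm_num, by norm_num, by norm_num, by norm_num,
    by norm_num, ?_⟩
  intro z₁₂₃ h1 h2
  have h : z₁₂₃ = 0 := le_antisymm h2 h1
  subst h
  norm_num
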